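/- arXiv:1912.05830 — 2 statements merged into one kernel-verified Lean document; each statement's English description precedes it below -/
import Mathlib

section
/- Telescoped mirror-descent regret bound: Let A be a finite nonempty set, H > 0, α > 0, K ≥ 1. Let p¹ ∈ Δ(A) have full support, let Q^k : A → [0,H] for k ∈ [K], and define recursively p^{k+1}(a) = p^k(a)·exp(α·Q^k(a)) / Σ_{a'} p^k(a')·exp(α·Q^k(a')). Then for any p* ∈ Δ(A), Σ_{k=1}^{K} Σ_{a∈A} Q^k(a)·(p*(a) − p^k(a)) ≤ α·H²·K/2 + α^{−1}·D_KL(p*‖p¹). -/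
open Finset

/-- KL divergence between distributions on a finite set (convention `0 · log 0 = 0`). -/
noncomputable def KLdiv {A : Type*} [Fintype A] (p q : A → ℝ) : ℝ :=
  ∑ a, p a * Real.log (p a / q a)

/-!
Each multiplicative-weights step trades regret against progress in `KL(p* ‖ pᵏ)`: the
divergence drops by exactly `α ⟪Qᵏ, p*⟫ - log Zᵏ`, where `Zᵏ` is the normalizing constant, and
a second-order bound on the log-moment-generating function of `α Qᵏ` under `pᵏ` gives
`log Zᵏ ≤ α ⟪Qᵏ, pᵏ⟫ + α² H² / 2`. Summing over `k`, the divergences telescope, and the final one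
is dropped by Gibbs' inequality.
-/

open Real

namespace Real

lemma exp_le_quadratic_of_nonpos {x : ℝ} (hx : x ≤ 0) :
    exp x ≤ 1 + x + x ^ 2 / 2 := by
  -- `exp x = (exp (-x))⁻¹`, and `(1 - x + x²/2) (1 + x + x²/2) = 1 + x⁴/4 ≥ 1`.
  have hneg := quadratic_le_exp_of_nonneg (neg_nonneg.mpr hx)
  have hinv : exp x * exp (-x) = 1 := by rw [← exp_add, add_neg_cancel, exp_zero]
  nlinarith [exp_pos x, sq_nonneg x, sq_nonneg (x ^ 2)]

end Real

section

variable {A : Type*} [Fintype A]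

noncomputable def expTilt (p X : A → ℝ) (a : A) : ℝ :=
  p a * exp (X a) / ∑ a', p a' * exp (X a')

lemma sum_mul_exp_pos {p : A → ℝ} (hp : ∀ a, 0 < p a) (hp1 : ∑ a, p a = 1) (X : A → ℝ) :
    0 < ∑ a, p a * exp (X a) :=
  sum_pos (fun a _ ↦ mul_pos (hp a) (exp_pos _))
    (nonempty_of_sum_ne_zero (hp1 ▸ one_ne_zero))

lemma expTilt_pos {p : A → ℝ} (hp : ∀ a, 0 < p a) (hp1 : ∑ a, p a = 1) (X : A → ℝ) (a : A) :
    0 < expTilt p X a :=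
  div_pos (mul_pos (hp a) (exp_pos _)) (sum_mul_exp_pos hp hp1 X)

lemma sum_expTilt {p : A → ℝ} (hp : ∀ a, 0 < p a) (hp1 : ∑ a, p a = 1) (X : A → ℝ) :
    ∑ a, expTilt p X a = 1 := by
  simp only [expTilt]
  rw [← sum_div, div_self (sum_mul_exp_pos hp hp1 X).ne']

lemma pos_and_sum_eq_one_of_eq_expTilt {p X : ℕ → A → ℝ} {K : ℕ} (hpos1 : ∀ a, 0 < p 1 a)
    (hsum1 : ∑ a, p 1 a = 1) (hrec : ∀ k ∈ Icc 1 K, p (k + 1) = expTilt (p k) (X k)) :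
    ∀ k ∈ Icc 1 (K + 1), (∀ a, 0 < p k a) ∧ ∑ a, p k a = 1 := by
  intro k hk
  obtain ⟨hk1, hkK⟩ := mem_Icc.mp hk
  clear hk
  induction k, hk1 using Nat.le_induction with
  | base => exact ⟨hpos1, hsum1⟩
  | succ n hn ih =>
    obtain ⟨hpos, hsum⟩ := ih (by omega)
    rw [hrec n (mem_Icc.mpr ⟨hn, by omega⟩)]
    exact ⟨expTilt_pos hpos hsum _, sum_expTilt hpos hsum _⟩

lemma KLdiv_nonneg {p q : A → ℝ} (hp : ∀ a, 0 ≤ p a) (hq : ∀ a, 0 < q a)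
    (hpq : ∑ a, q a ≤ ∑ a, p a) : 0 ≤ KLdiv p q := by
  have hterm : ∀ a, p a - q a ≤ p a * log (p a / q a) := fun a ↦ by
    have h := mul_le_mul_of_nonneg_left
      (self_sub_one_le_mul_log (div_nonneg (hp a) (hq a).le)) (hq a).le
    rwa [mul_sub, mul_one, ← mul_assoc, mul_div_cancel₀ _ (hq a).ne'] at h
  calc 0 ≤ ∑ a, p a - ∑ a, q a := sub_nonneg.mpr hpq
    _ = ∑ a, (p a - q a) := (sum_sub_distrib _ _).symm
    _ ≤ KLdiv p q := sum_le_sum fun a _ ↦ hterm a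

lemma KLdiv_sub_KLdiv_expTilt {p : A → ℝ} (hp : ∀ a, 0 < p a) (hp1 : ∑ a, p a = 1)
    {r : A → ℝ} (hr1 : ∑ a, r a = 1) (X : A → ℝ) :
    KLdiv r p - KLdiv r (expTilt p X) = ∑ a, r a * X a - log (∑ a, p a * exp (X a)) := by
  have hZ := sum_mul_exp_pos hp hp1 X
  have hterm : ∀ a, r a * log (r a / p a) - r a * log (r a / expTilt p X a) =
      r a * X a - r a * log (∑ a, p a * exp (X a)) := fun a ↦ by
    rcases eq_or_ne (r a) 0 with hr | hr
    · simp [hr]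
    rw [log_div hr (hp a).ne', log_div hr (expTilt_pos hp hp1 X a).ne', expTilt,
      log_div (mul_pos (hp a) (exp_pos _)).ne' hZ.ne', log_mul (hp a).ne' (exp_pos _).ne', log_exp]
    ring
  rw [KLdiv, KLdiv, ← sum_sub_distrib, sum_congr rfl fun a _ ↦ hterm a, sum_sub_distrib,
    ← sum_mul, hr1, one_mul]

lemma log_sum_mul_exp_le {p X : A → ℝ} (hp : ∀ a, 0 ≤ p a) (hp1 : ∑ a, p a = 1) {c : ℝ}
    (hX0 : ∀ a, 0 ≤ X a) (hXc : ∀ a, X a ≤ c) :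
    log (∑ a, p a * exp (X a)) ≤ ∑ a, p a * X a + c ^ 2 / 2 := by
  have hZ : 1 ≤ ∑ a, p a * exp (X a) := calc
    1 = ∑ a, p a * 1 := by simp [hp1]
    _ ≤ ∑ a, p a * exp (X a) :=
      sum_le_sum fun a _ ↦ mul_le_mul_of_nonneg_left (one_le_exp (hX0 a)) (hp a)
  -- Shift `X` by `c` so that the quadratic bound for `exp` on `(-∞, 0]` applies.
  have hterm : ∀ a, exp (X a) ≤ exp c * (1 - c + c ^ 2 / 2 + X a) := fun a ↦ by
    have hsq : (X a - c) ^ 2 ≤ c ^ 2 := by nlinarith [hX0 a, hXc a]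
    calc exp (X a) = exp c * exp (X a - c) := by rw [← exp_add]; ring_nf
      _ ≤ exp c * (1 + (X a - c) + (X a - c) ^ 2 / 2) := mul_le_mul_of_nonneg_left
          (exp_le_quadratic_of_nonpos (by linarith [hXc a])) (exp_pos c).le
      _ ≤ exp c * (1 - c + c ^ 2 / 2 + X a) :=
          mul_le_mul_of_nonneg_left (by linarith) (exp_pos c).le
  rw [log_le_iff_le_exp (by linarith)]
  calc ∑ a, p a * exp (X a) ≤ ∑ a, p a * (exp c * (1 - c + c ^ 2 / 2 + X a)) :=
        sum_le_sum fun a _ ↦ mul_le_mul_of_nonneg_left (hterm a) (hp a)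
    _ = exp c * ((∑ a, p a * X a - c + c ^ 2 / 2) + 1) := by
        simp only [mul_add, mul_left_comm _ (exp c), ← mul_sum, sum_add_distrib, ← sum_mul, hp1]
        ring
    _ ≤ exp c * exp (∑ a, p a * X a - c + c ^ 2 / 2) :=
        mul_le_mul_of_nonneg_left (add_one_le_exp _) (exp_pos c).le
    _ = exp (∑ a, p a * X a + c ^ 2 / 2) := by rw [← exp_add]; ring_nf

lemma sum_mul_sub_le_of_expTilt {p r Q : A → ℝ} (hp : ∀ a, 0 < p a) (hp1 : ∑ a, p a = 1)
    (hr1 : ∑ a, r a = 1) {α H : ℝ} (hα : 0 < α) (hQ0 : ∀ a, 0 ≤ Q a) (hQH : ∀ a, Q a ≤ H) :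
    ∑ a, Q a * (r a - p a) ≤
      α * H ^ 2 / 2 + α⁻¹ * (KLdiv r p - KLdiv r (expTilt p fun a ↦ α * Q a)) := by
  have hlog := log_sum_mul_exp_le (fun a ↦ (hp a).le) hp1 (c := α * H)
    (fun a ↦ mul_nonneg hα.le (hQ0 a)) (fun a ↦ mul_le_mul_of_nonneg_left (hQH a) hα.le)
  have hscale : ∀ s : A → ℝ, ∑ a, s a * (α * Q a) = α * ∑ a, s a * Q a := fun s ↦ by
    rw [mul_sum]; exact sum_congr rfl fun a _ ↦ by ring
  have hregret : ∑ a, Q a * (r a - p a) = ∑ a, r a * Q a - ∑ a, p a * Q a := by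
    rw [← sum_sub_distrib]; exact sum_congr rfl fun a _ ↦ by ring
  rw [KLdiv_sub_KLdiv_expTilt hp hp1 hr1, ← mul_le_mul_iff_of_pos_left hα, mul_add,
    ← mul_assoc, mul_inv_cancel₀ hα.ne', one_mul, hregret]
  rw [hscale] at hlog ⊢
  linarith

end

lemma sum_Icc_le_of_le_add_mul_sub_succ {R D : ℕ → ℝ} {K : ℕ} {c β : ℝ} (hβ : 0 ≤ β)
    (hD : 0 ≤ D (K + 1)) (hR : ∀ k ∈ Icc 1 K, R k ≤ c + β * (D k - D (k + 1))) :
    ∑ k ∈ Icc 1 K, R k ≤ K * c + β * D 1 := by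
  have htelescope : ∑ k ∈ Icc 1 K, (D k - D (k + 1)) = D 1 - D (K + 1) := by
    have h := sum_Ico_sub D (Nat.le_add_left 1 K)
    rw [sum_sub_distrib] at h
    rw [← Ico_add_one_right_eq_Icc, sum_sub_distrib]
    linarith
  calc ∑ k ∈ Icc 1 K, R k ≤ ∑ k ∈ Icc 1 K, (c + β * (D k - D (k + 1))) := sum_le_sum hR
    _ = K * c + β * (D 1 - D (K + 1)) := by
        rw [sum_add_distrib, ← mul_sum, htelescope, sum_const, Nat.card_Icc, nsmul_eq_mul,
          Nat.add_sub_cancel]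
    _ ≤ K * c + β * D 1 := by linarith [mul_nonneg hβ hD]

theorem mirror_descent_regret_general {A : Type*} [Fintype A]
    (H α : ℝ) (hα : 0 < α)
    (K : ℕ)
    (p : ℕ → A → ℝ) (hp10 : ∀ a, 0 < p 1 a) (hp11 : ∑ a, p 1 a = 1)
    (Q : ℕ → A → ℝ)
    (hQ0 : ∀ k ∈ Finset.Icc 1 K, ∀ a, 0 ≤ Q k a)
    (hQH : ∀ k ∈ Finset.Icc 1 K, ∀ a, Q k a ≤ H)
    (hrec : ∀ k ∈ Finset.Icc 1 K, ∀ a,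
      p (k+1) a = p k a * Real.exp (α * Q k a) / ∑ a', p k a' * Real.exp (α * Q k a'))
    (pstar : A → ℝ) (hps0 : ∀ a, 0 ≤ pstar a) (hps1 : ∑ a, pstar a = 1) :
    ∑ k ∈ Finset.Icc 1 K, ∑ a, Q k a * (pstar a - p k a) ≤
      α * H ^ 2 * K / 2 + α⁻¹ * KLdiv pstar (p 1) := by
  have hrec' : ∀ k ∈ Icc 1 K, p (k + 1) = expTilt (p k) fun a ↦ α * Q k a :=
    fun k hk ↦ funext (hrec k hk)
  have hdist := pos_and_sum_eq_one_of_eq_expTilt hp10 hp11 hrec'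
  have hstep : ∀ k ∈ Icc 1 K, ∑ a, Q k a * (pstar a - p k a) ≤
      α * H ^ 2 / 2 + α⁻¹ * (KLdiv pstar (p k) - KLdiv pstar (p (k + 1))) := fun k hk ↦ by
    obtain ⟨hpos, hsum⟩ := hdist k (Icc_subset_Icc_right (by omega) hk)
    rw [hrec' k hk]
    exact sum_mul_sub_le_of_expTilt hpos hsum hps1 hα (hQ0 k hk) (hQH k hk)
  obtain ⟨hlast_pos, hlast_sum⟩ := hdist (K + 1) (right_mem_Icc.mpr (by omega))
  have hlast : 0 ≤ KLdiv pstar (p (K + 1)) :=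
    KLdiv_nonneg hps0 hlast_pos (by rw [hps1, hlast_sum])
  calc ∑ k ∈ Icc 1 K, ∑ a, Q k a * (pstar a - p k a)
      ≤ K * (α * H ^ 2 / 2) + α⁻¹ * KLdiv pstar (p 1) :=
        sum_Icc_le_of_le_add_mul_sub_succ (inv_pos.mpr hα).le hlast hstep
    _ = α * H ^ 2 * K / 2 + α⁻¹ * KLdiv pstar (p 1) := by ring

/-- Telescoped mirror-descent regret bound. -/
theorem mirror_descent_regret {A : Type*} [Fintype A] [Nonempty A]
    (H α : ℝ) (hH : 0 < H) (hα : 0 < α)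
    (K : ℕ) (hK : 1 ≤ K)
    (p : ℕ → A → ℝ) (hp10 : ∀ a, 0 < p 1 a) (hp11 : ∑ a, p 1 a = 1)
    (Q : ℕ → A → ℝ)
    (hQ0 : ∀ k ∈ Finset.Icc 1 K, ∀ a, 0 ≤ Q k a)
    (hQH : ∀ k ∈ Finset.Icc 1 K, ∀ a, Q k a ≤ H)
    (hrec : ∀ k ∈ Finset.Icc 1 K, ∀ a,
      p (k+1) a = p k a * Real.exp (α * Q k a) / ∑ a', p k a' * Real.exp (α * Q k a'))
    (pstar : A → ℝ) (hps0 : ∀ a, 0 ≤ pstar a) (hps1 : ∑ a, pstar a = 1) :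
    ∑ k ∈ Finset.Icc 1 K, ∑ a, Q k a * (pstar a - p k a) ≤
      α * H ^ 2 * K / 2 + α⁻¹ * KLdiv pstar (p 1) :=
  mirror_descent_regret_general H α hα K p hp10 hp11 Q hQ0 hQH hrec pstar hps0 hps1
end

section
/- Single-episode value decomposition identity: Fix a policy π, functions Q_h : S × A → ℝ for h ∈ [H], define V_h(x) = Σ_{a} π_h(a|x)·Q_h(x,a) for h ∈ [H] and V_{H+1} ≡ 0, and define the model prediction error ι_h = r_h + P_h V_{h+1} − Q_h. Let (x_1, a_1, x_2, a_2, …, x_H, a_H, x_{H+1}) be any sequence with x_h ∈ S and a_h ∈ A. Define D_{h,1} = Σ_{a} π_h(a|x_h)·(Q_h − Q^π_h)(x_h,a) − (Q_h − Q^π_h)(x_h,a_h) and D_{h,2} = (P_h(V_{h+1} − V^π_{h+1}))(x_h,a_h) − (V_{h+1} − V^π_{h+1})(x_{h+1}). Then V_1(x_1) − V^π_1(x_1) = − Σ_{h=1}^{H} ι_h(x_h,a_h) + Σ_{h=1}^{H} (D_{h,1} + D_{h,2}). -/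
open Finset

variable {S A : Type*}

/-- Value function computed with `n` remaining recursion steps, at step `h`. -/
noncomputable def Vrem [Fintype S] [Fintype A] (P : ℕ → S → A → S → ℝ)
    (r : ℕ → S → A → ℝ) (po : ℕ → S → A → ℝ) : ℕ → ℕ → S → ℝ
  | 0, _, _ => 0
  | (n+1), h, x => ∑ a, po h x a * (r h x a + ∑ x', P h x a x' * Vrem P r po n (h+1) x')

/-- Value function `V^π_h` of policy `po` in the episodic MDP with horizon `H`. -/
noncomputable def Vval [Fintype S] [Fintype A] (H : ℕ) (P : ℕ → S → A → S → ℝ)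
    (r : ℕ → S → A → ℝ) (po : ℕ → S → A → ℝ) (h : ℕ) (x : S) : ℝ :=
  Vrem P r po (H + 1 - h) h x

/-- Action-value function `Q^π_h` of policy `po`. -/
noncomputable def Qval [Fintype S] [Fintype A] (H : ℕ) (P : ℕ → S → A → S → ℝ)
    (r : ℕ → S → A → ℝ) (po : ℕ → S → A → ℝ) (h : ℕ) (x : S) (a : A) : ℝ :=
  r h x a + ∑ x', P h x a x' * Vval H P r po (h+1) x'

/-! Writing `g h = V^π_h(x_h) - V_h(x_h)`, the `h`-th summand `D_{h,1} + D_{h,2} - ι_h` collapses to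
`g (h+1) - g h`: the terms in `Q_h(x_h,a_h)` and `(P_h V_{h+1})(x_h,a_h)` cancel, and what remains
besides `g` is `Q^π_h - r_h - P_h V^π_{h+1} = 0`. The sum therefore telescopes to
`g (H+1) - g 1 = V_1(x_1) - V^π_1(x_1)`, since both value functions vanish at `H + 1`. -/

section

variable [Fintype S] [Fintype A] (H : ℕ) (P : ℕ → S → A → S → ℝ) (r : ℕ → S → A → ℝ)
  (po : ℕ → S → A → ℝ)

theorem Vval_eq_sum_mul_Qval {h : ℕ} (hh : h ≤ H) (x : S) :
    Vval H P r po h x = ∑ a, po h x a * Qval H P r po h x a := by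
  rw [Vval, show H + 1 - h = H - h + 1 by omega, Vrem]
  simp only [Qval, Vval, show H + 1 - (h + 1) = H - h by omega]

@[simp]
theorem Vval_horizon_succ (x : S) : Vval H P r po (H + 1) x = 0 := by
  simp [Vval, Vrem]

theorem episode_summand_eq_sub (Q : ℕ → S → A → ℝ) (V : ℕ → S → ℝ) {h : ℕ} (hh : h ≤ H)
    (x : S) (a : A) (y : S) (hV : V h x = ∑ b, po h x b * Q h x b) :
    (((∑ b, po h x b * (Q h x b - Qval H P r po h x b)) - (Q h x a - Qval H P r po h x a))
        + ((∑ x', P h x a x' * (V (h+1) x' - Vval H P r po (h+1) x'))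
          - (V (h+1) y - Vval H P r po (h+1) y)))
      - ((r h x a + ∑ x', P h x a x' * V (h+1) x') - Q h x a)
      = (Vval H P r po (h+1) y - V (h+1) y) - (Vval H P r po h x - V h x) := by
  simp only [mul_sub, sum_sub_distrib, hV, Vval_eq_sum_mul_Qval H P r po hh, Qval]
  ring

end

theorem single_episode_decomposition_general [Fintype S] [Fintype A]
    (H : ℕ) (hH : 1 ≤ H)
    (P : ℕ → S → A → S → ℝ)
    (r : ℕ → S → A → ℝ)
    (po : ℕ → S → A → ℝ)
    (Q : ℕ → S → A → ℝ) (V : ℕ → S → ℝ)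
    (hV : ∀ h ∈ Finset.Icc 1 H, ∀ x, V h x = ∑ a, po h x a * Q h x a)
    (hVend : ∀ x, V (H+1) x = 0)
    (xs : ℕ → S) (as : ℕ → A) :
    V 1 (xs 1) - Vval H P r po 1 (xs 1) =
      -(∑ h ∈ Finset.Icc 1 H,
          (r h (xs h) (as h) + (∑ x', P h (xs h) (as h) x' * V (h+1) x')
            - Q h (xs h) (as h)))
      + ∑ h ∈ Finset.Icc 1 H,
          (((∑ a, po h (xs h) a * (Q h (xs h) a - Qval H P r po h (xs h) a))
              - (Q h (xs h) (as h) - Qval H P r po h (xs h) (as h)))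
            + ((∑ x', P h (xs h) (as h) x' * (V (h+1) x' - Vval H P r po (h+1) x'))
              - (V (h+1) (xs (h+1)) - Vval H P r po (h+1) (xs (h+1))))) := by
  set g : ℕ → ℝ := fun h => Vval H P r po h (xs h) - V h (xs h)
  rw [neg_add_eq_sub, ← sum_sub_distrib]
  calc V 1 (xs 1) - Vval H P r po 1 (xs 1) = g (H + 1) - g 1 := by simp [g, hVend]
    _ = ∑ h ∈ Icc 1 H, (g (h + 1) - g h) := (sum_Icc_sub hH g).symm
    _ = _ := sum_congr rfl fun h hh =>
      (episode_summand_eq_sub H P r po Q V (mem_Icc.1 hh).2 _ _ _ (hV h hh _)).symm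

/-- Single-episode value decomposition identity. -/
theorem single_episode_decomposition [Fintype S] [Fintype A] [Nonempty A]
    (H : ℕ) (hH : 1 ≤ H)
    (P : ℕ → S → A → S → ℝ)
    (hP0 : ∀ h ∈ Finset.Icc 1 H, ∀ x a x', 0 ≤ P h x a x')
    (hP1 : ∀ h ∈ Finset.Icc 1 H, ∀ x a, ∑ x', P h x a x' = 1)
    (r : ℕ → S → A → ℝ)
    (hr : ∀ h ∈ Finset.Icc 1 H, ∀ x a, 0 ≤ r h x a ∧ r h x a ≤ 1)
    (po : ℕ → S → A → ℝ)
    (hpo0 : ∀ h ∈ Finset.Icc 1 H, ∀ x a, 0 ≤ po h x a)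
    (hpo1 : ∀ h ∈ Finset.Icc 1 H, ∀ x, ∑ a, po h x a = 1)
    (Q : ℕ → S → A → ℝ) (V : ℕ → S → ℝ)
    (hV : ∀ h ∈ Finset.Icc 1 H, ∀ x, V h x = ∑ a, po h x a * Q h x a)
    (hVend : ∀ x, V (H+1) x = 0)
    (xs : ℕ → S) (as : ℕ → A) :
    V 1 (xs 1) - Vval H P r po 1 (xs 1) =
      -(∑ h ∈ Finset.Icc 1 H,
          (r h (xs h) (as h) + (∑ x', P h (xs h) (as h) x' * V (h+1) x')
            - Q h (xs h) (as h)))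
      + ∑ h ∈ Finset.Icc 1 H,
          (((∑ a, po h (xs h) a * (Q h (xs h) a - Qval H P r po h (xs h) a))
              - (Q h (xs h) (as h) - Qval H P r po h (xs h) (as h)))
            + ((∑ x', P h (xs h) (as h) x' * (V (h+1) x' - Vval H P r po (h+1) x'))
              - (V (h+1) (xs (h+1)) - Vval H P r po (h+1) (xs (h+1))))) :=
  single_episode_decomposition_general H hH P r po Q V hV hVend xs as
end
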